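/- Let T = (V,E) be a tree with at least 3 edges and no internal vertex of degree 2, and let {u,v} ∈ E with deg(u) ≠ 3 and deg(v) ≠ 3. Then F_T^{{u,v}} := conv{ c^{i↔j} : i,j distinct leaves, {u,v} ∉ i↔j } equals P_T ∩ { x : x_{{u,v}} = 0 } and is a facet of P_T, i.e., has dimension |E| − 2. -/

import Mathlib

/-!
The functional `x ↦ ∑_{e ∈ E_leaf} x_e` takes the value 2 at every leaf-to-leaf path vector,
so the convex hull of any set of such vectors has dimension one less than the rank of their
linear span. In a forest without inner vertices of degree 2 the leaf-to-leaf path vectors span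
`ℝ^E`. The path vectors avoiding `uv` are, up to `0`, those of the forest `T - uv`, which
because `deg u, deg v ∉ {2, 3}` again has no inner vertex of degree 2; so they span `ℝ^{E - uv}`.
Finally `x_{uv} ≥ 0` holds on `P_T`, and the face it cuts out is the hull of the generators
lying on it.
-/

open Classical SimpleGraph

noncomputable section

variable {V : Type*}

/-- A leaf: a vertex with exactly one neighbor. -/
def IsLeaf (G : SimpleGraph V) (v : V) : Prop := ∃! w, G.Adj v w

/-- `e` is an edge on the (unique, for trees) path between `i` and `j`. -/
def onPath (G : SimpleGraph V) (i j : V) (e : Sym2 V) : Prop :=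
  ∃ p : G.Walk i j, p.IsPath ∧ e ∈ p.edges

/-- The edge indicator vector `c^{i↔j}` of the path between `i` and `j`. -/
def pathVec (G : SimpleGraph V) (i j : V) : Sym2 V → ℝ :=
  fun e => if onPath G i j e then 1 else 0

/-- The path polytope `P_T`: the convex hull of the indicator vectors of the
paths between pairs of distinct leaves. -/
def pathPolytope (G : SimpleGraph V) : Set (Sym2 V → ℝ) :=
  convexHull ℝ {x | ∃ i j : V, i ≠ j ∧ IsLeaf G i ∧ IsLeaf G j ∧ x = pathVec G i j}

/-- `E_leaf(T)`: edges incident to at least one leaf. -/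
def leafEdges (G : SimpleGraph V) : Set (Sym2 V) :=
  {e | e ∈ G.edgeSet ∧ ∃ v ∈ e, IsLeaf G v}

/-- A face of `P`: the intersection of `P` with the boundary hyperplane of a valid
linear inequality. -/
def IsFaceOf {E : Type*} [AddCommGroup E] [Module ℝ E] (P F : Set E) : Prop :=
  ∃ (a : E →ₗ[ℝ] ℝ) (b : ℝ), (∀ x ∈ P, a x ≤ b) ∧ F = {x ∈ P | a x = b}

/-- The dimension of a polytope: the rank of the direction of its affine span. -/
def polyDim {E : Type*} [AddCommGroup E] [Module ℝ E] (P : Set E) : ℕ :=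
  Module.finrank ℝ (affineSpan ℝ P).direction

/-- A facet: a face of dimension `dim P − 1`. -/
def IsFacetOf {E : Type*} [AddCommGroup E] [Module ℝ E] (P F : Set E) : Prop :=
  IsFaceOf P F ∧ polyDim F + 1 = polyDim P

theorem pathVec_comm (H : SimpleGraph V) (i j : V) : pathVec H i j = pathVec H j i := by
  have h : ∀ {a b e}, onPath H a b e → onPath H b a e := fun ⟨p, hp, he⟩ =>
    ⟨p.reverse, hp.reverse, by simpa using he⟩
  funext e
  simp only [pathVec, show onPath H i j e ↔ onPath H j i e from ⟨h, h⟩]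

theorem pathVec_self (H : SimpleGraph V) (i : V) : pathVec H i i = 0 := by
  funext e
  simp only [pathVec, Pi.zero_apply, ite_eq_right_iff]
  rintro ⟨p, hp, he⟩
  rw [Walk.edges_eq_nil.mpr (Walk.isPath_iff_nil.mp hp)] at he
  exact absurd he List.not_mem_nil

theorem pathVec_nonneg (H : SimpleGraph V) (i j : V) (e : Sym2 V) : 0 ≤ pathVec H i j e := by
  unfold pathVec; split <;> norm_num

theorem pathVec_eq_zero_iff {H : SimpleGraph V} {i j : V} {e : Sym2 V} :
    pathVec H i j e = 0 ↔ ¬ onPath H i j e := by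
  simp [pathVec]

theorem pathVec_eq_zero_of_not_reachable {H : SimpleGraph V} {i j : V}
    (h : ¬ H.Reachable i j) : pathVec H i j = 0 :=
  funext fun _ => pathVec_eq_zero_iff.mpr fun ⟨p, _, _⟩ => h ⟨p⟩

theorem onPath.mem_edgeSet {H : SimpleGraph V} {i j : V} {e : Sym2 V} (h : onPath H i j e) :
    e ∈ H.edgeSet :=
  let ⟨p, _, he⟩ := h
  p.edges_subset_edgeSet he

theorem pathVec_mem_spanSubset [Finite V] {H : SimpleGraph V} {i j : V} {T : Set (Sym2 V)}
    (hT : ∀ e, onPath H i j e → e ∈ T) : pathVec H i j ∈ Pi.spanSubset ℝ T :=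
  Pi.mem_spanSubset_iff.mpr fun e he => pathVec_eq_zero_iff.mpr (mt (hT e) he)

theorem isLeaf_iff_ncard_neighborSet {H : SimpleGraph V} {w : V} :
    IsLeaf H w ↔ (H.neighborSet w).ncard = 1 := by
  simp only [Set.ncard_eq_one, Set.eq_singleton_iff_unique_mem, IsLeaf, ExistsUnique,
    mem_neighborSet]

theorem exists_two_adj_ne_of_not_isLeaf [Finite V] {H : SimpleGraph V} {m a : V}
    (hm : ¬ IsLeaf H m) (hdeg : (H.neighborSet m).ncard ≠ 2) (ha : H.Adj m a) :
    ∃ b c, H.Adj m b ∧ H.Adj m c ∧ b ≠ a ∧ c ≠ a ∧ b ≠ c := by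
  have hfin := (H.neighborSet m).toFinite
  have h1 : (H.neighborSet m).ncard ≠ 1 := mt isLeaf_iff_ncard_neighborSet.mpr hm
  have h0 : 0 < (H.neighborSet m).ncard := (Set.ncard_pos hfin).mpr ⟨a, ha⟩
  have hdiff : 1 < (H.neighborSet m \ {a}).ncard := by
    rw [Set.ncard_sdiff_singleton_of_mem (show a ∈ H.neighborSet m from ha)]; omega
  obtain ⟨b, c, hb, hc, hbc⟩ := (Set.one_lt_ncard_iff hfin.sdiff).mp hdiff
  exact ⟨b, c, hb.1, hc.1, hb.2, hc.2, hbc⟩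

theorem SimpleGraph.Walk.IsPath.eq_or_eq_of_isLeaf {H : SimpleGraph V} {x y w : V}
    {p : H.Walk x y} (hp : p.IsPath) (hw : w ∈ p.support) (hl : IsLeaf H w) :
    w = x ∨ w = y := by
  obtain ⟨n, rfl, hn⟩ := Walk.mem_support_iff_exists_getVert.mp hw
  by_contra! h
  have hn0 : n ≠ 0 := fun h0 => h.1 (h0 ▸ p.getVert_zero)
  have hnl : n ≠ p.length := fun hl => h.2 (hl ▸ p.getVert_length)
  have hsucc := p.adj_getVert_succ (i := n) (by omega)
  have hpred := p.adj_getVert_succ (i := n - 1) (by omega)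
  rw [Nat.sub_add_cancel (by omega)] at hpred
  have := hp.getVert_injOn (by simp; omega) (by simp; omega) (hl.unique hsucc hpred.symm)
  omega

def leafPathVecs (H : SimpleGraph V) : Set (Sym2 V → ℝ) :=
  {x | ∃ i j : V, i ≠ j ∧ IsLeaf H i ∧ IsLeaf H j ∧ x = pathVec H i j}

namespace SimpleGraph.IsAcyclic

variable {H : SimpleGraph V}

theorem onPath_iff (hH : H.IsAcyclic) {i j : V} {p : H.Walk i j} (hp : p.IsPath)
    {e : Sym2 V} : onPath H i j e ↔ e ∈ p.edges := by
  refine ⟨fun ⟨q, hq, he⟩ => ?_, fun he => ⟨p, hp, he⟩⟩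
  obtain rfl : q = p := congrArg Subtype.val ((hH.subsingleton_path i j).elim ⟨q, hq⟩ ⟨p, hp⟩)
  exact he

theorem pathVec_eq (hH : H.IsAcyclic) {i j : V} {p : H.Walk i j} (hp : p.IsPath) :
    pathVec H i j = fun e => if e ∈ p.edges then 1 else 0 := by
  funext e
  simp only [pathVec, hH.onPath_iff hp]

theorem pathVec_eq_add (hH : H.IsAcyclic) {i j m : V} {p : H.Walk i j} (hp : p.IsPath)
    (hm : m ∈ p.support) :
    pathVec H i j = pathVec H i m + pathVec H m j := by
  have hedges : p.edges = (p.takeUntil m hm).edges ++ (p.dropUntil m hm).edges := by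
    rw [← Walk.edges_append, p.take_spec hm]
  have hdisj : (p.takeUntil m hm).edges.Disjoint (p.dropUntil m hm).edges :=
    List.disjoint_of_nodup_append (hedges ▸ hp.isTrail.edges_nodup)
  funext e
  rw [hH.pathVec_eq hp, hH.pathVec_eq (hp.takeUntil hm), hH.pathVec_eq (hp.dropUntil hm)]
  simp only [Pi.add_apply, hedges, List.mem_append]
  by_cases ha : e ∈ (p.takeUntil m hm).edges
  · have hb : e ∉ (p.dropUntil m hm).edges := hdisj ha
    simp [ha, hb]
  · simp [ha]

theorem pathVec_of_adj (hH : H.IsAcyclic) {a b : V} (hab : H.Adj a b) :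
    pathVec H a b = Pi.single s(a, b) 1 := by
  funext e
  rw [hH.pathVec_eq hab.isPath_toWalk]
  by_cases he : e = s(a, b) <;> simp [Adj.toWalk, he]

theorem eq_penultimate (hH : H.IsAcyclic) {m x z : V} {p : H.Walk m x} (hp : p.IsPath)
    (hz : z ∈ p.support) (hzx : H.Adj z x) : z = p.penultimate := by
  have hdrop : p.dropUntil z hz = hzx.toWalk := congrArg Subtype.val
    ((hH.subsingleton_path z x).elim ⟨_, hp.dropUntil hz⟩ ⟨_, hzx.isPath_toWalk⟩)
  have hsplit := p.take_spec hz
  rw [hdrop, Adj.toWalk, ← Walk.concat_eq_append] at hsplit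
  rw [← hsplit, Walk.penultimate_concat]

theorem exists_adj_notMem_support (hH : H.IsAcyclic) {m x : V} {p : H.Walk m x}
    (hp : p.IsPath) (hmx : m ≠ x) (hx : ¬ IsLeaf H x) : ∃ z, H.Adj x z ∧ z ∉ p.support := by
  by_contra! h
  exact hx ⟨p.penultimate, (p.adj_penultimate (Walk.not_nil_of_ne hmx)).symm,
    fun z hz => hH.eq_penultimate hp (h z hz) hz.symm⟩

theorem mem_support_of_branches (hH : H.IsAcyclic) {m a b x y : V} (ha : H.Adj m a)
    (hb : H.Adj m b) (hab : a ≠ b) {wa : H.Walk a x} (hwa : m ∉ wa.support) {wb : H.Walk b y}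
    (hwb : m ∉ wb.support) (p : H.Walk x y) : m ∈ p.support := by
  by_contra hmp
  let r := (wa.append (p.append wb.reverse)).toPath
  have hr : m ∉ (r : H.Walk a b).support := fun h => by
    have := Walk.support_toPath_subset_support _ h
    simp only [Walk.mem_support_append_iff, Walk.support_reverse, List.mem_reverse] at this
    tauto
  have hamb : (Walk.cons ha.symm hb.toWalk).IsPath := by
    simp [Adj.toWalk, Walk.cons_isPath_iff, ha.ne', hb.ne, hab]
  have := congrArg Subtype.val ((hH.subsingleton_path a b).elim r ⟨_, hamb⟩)
  exact hr (this ▸ by simp)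

theorem ne_of_branches (hH : H.IsAcyclic) {m a b x y : V} (ha : H.Adj m a) (hb : H.Adj m b)
    (hab : a ≠ b) {wa : H.Walk a x} (hwa : m ∉ wa.support) {wb : H.Walk b y}
    (hwb : m ∉ wb.support) : x ≠ y := by
  rintro rfl
  have := Walk.mem_support_nil_iff.mp (hH.mem_support_of_branches ha hb hab hwa hwb Walk.nil)
  exact hwa (this ▸ wa.end_mem_support)

theorem pathVec_eq_add_of_branches (hH : H.IsAcyclic) {m a b x y : V} (ha : H.Adj m a)
    (hb : H.Adj m b) (hab : a ≠ b) {wa : H.Walk a x} (hwa : m ∉ wa.support) {wb : H.Walk b y}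
    (hwb : m ∉ wb.support) : pathVec H x y = pathVec H x m + pathVec H m y :=
  let p := (wa.reverse.append (Walk.cons ha.symm (Walk.cons hb wb))).toPath
  hH.pathVec_eq_add p.2 (hH.mem_support_of_branches ha hb hab hwa hwb p.1)

theorem exists_isLeaf_append_isPath [Fintype V] (hH : H.IsAcyclic) {m x : V} (p : H.Walk m x)
    (hp : p.IsPath) (hmx : m ≠ x) : ∃ ℓ, IsLeaf H ℓ ∧ ∃ q : H.Walk x ℓ, (p.append q).IsPath := by
  by_cases hx : IsLeaf H x
  · exact ⟨x, hx, Walk.nil, by rwa [Walk.append_nil]⟩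
  obtain ⟨z, hxz, hz⟩ := hH.exists_adj_notMem_support hp hmx hx
  have hp' := hp.concat hz hxz
  obtain ⟨ℓ, hℓ, q, hq⟩ := hH.exists_isLeaf_append_isPath (p.concat hxz) hp'
    (fun h => hz (h ▸ p.start_mem_support))
  exact ⟨ℓ, hℓ, Walk.cons hxz q, by rwa [Walk.concat_append] at hq⟩
termination_by Fintype.card V - p.length
decreasing_by
  have := hp'.length_lt
  rw [Walk.length_concat] at this ⊢
  omega

theorem exists_isLeaf_beyond [Fintype V] (hH : H.IsAcyclic) {m a : V} (hma : H.Adj m a) :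
    ∃ ℓ, IsLeaf H ℓ ∧ ∃ q : H.Walk a ℓ, q.IsPath ∧ m ∉ q.support := by
  obtain ⟨ℓ, hℓ, q, hq⟩ := hH.exists_isLeaf_append_isPath hma.toWalk hma.isPath_toWalk hma.ne
  rw [Adj.toWalk, Walk.cons_append, Walk.nil_append, Walk.cons_isPath_iff] at hq
  exact ⟨ℓ, hℓ, q, hq⟩

variable [Fintype V]

/-- The vertex `m`, if not a leaf, has two more branches besides the one towards `i`; with
leaves `j`, `k` at their ends, `2 c^{i↔m} = c^{i↔j} + c^{i↔k} - c^{j↔k}`. -/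
theorem pathVec_mem_span_of_isLeaf (hH : H.IsAcyclic)
    (hdeg : ∀ w, ¬ IsLeaf H w → (H.neighborSet w).ncard ≠ 2) {i m : V} (hi : IsLeaf H i)
    (hr : H.Reachable m i) : pathVec H i m ∈ Submodule.span ℝ (leafPathVecs H) := by
  by_cases hm : IsLeaf H m
  · by_cases him : i = m
    · rw [him, pathVec_self]; exact zero_mem _
    · exact Submodule.subset_span ⟨i, m, him, hi, hm, rfl⟩
  obtain ⟨w⟩ := hr
  obtain ⟨p, hp⟩ := w.toPath
  cases p with
  | nil => exact absurd hi hm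
  | cons ha wa =>
    rw [Walk.cons_isPath_iff] at hp
    obtain ⟨b, c, hb, hc, hba, hca, hbc⟩ := exists_two_adj_ne_of_not_isLeaf hm (hdeg m hm) ha
    obtain ⟨j, hj, wb, -, hwb⟩ := hH.exists_isLeaf_beyond hb
    obtain ⟨k, hk, wc, -, hwc⟩ := hH.exists_isLeaf_beyond hc
    have key : pathVec H i m = (2⁻¹ : ℝ) • (pathVec H i j + pathVec H i k - pathVec H j k) := by
      rw [hH.pathVec_eq_add_of_branches ha hb hba.symm hp.2 hwb,
        hH.pathVec_eq_add_of_branches ha hc hca.symm hp.2 hwc,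
        hH.pathVec_eq_add_of_branches hb hc hbc hwb hwc, pathVec_comm H j m]
      module
    rw [key]
    refine Submodule.smul_mem _ _ (sub_mem (add_mem ?_ ?_) ?_) <;> apply Submodule.subset_span
    · exact ⟨i, j, hH.ne_of_branches ha hb hba.symm hp.2 hwb, hi, hj, rfl⟩
    · exact ⟨i, k, hH.ne_of_branches ha hc hca.symm hp.2 hwc, hi, hk, rfl⟩
    · exact ⟨j, k, hH.ne_of_branches hb hc hbc hwb hwc, hj, hk, rfl⟩

theorem single_mem_span_leafPathVecs (hH : H.IsAcyclic)
    (hdeg : ∀ w, ¬ IsLeaf H w → (H.neighborSet w).ncard ≠ 2) {a b : V} (hab : H.Adj a b) :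
    Pi.single s(a, b) 1 ∈ Submodule.span ℝ (leafPathVecs H) := by
  obtain ⟨ℓ, hℓ, w, hw, hbw⟩ := hH.exists_isLeaf_beyond hab.symm
  have hpath : (w.reverse.concat hab).IsPath :=
    hw.reverse.concat (by rwa [Walk.support_reverse, List.mem_reverse]) hab
  have hsplit := hH.pathVec_eq_add hpath (by simp [Walk.support_concat] : a ∈ _)
  rw [← hH.pathVec_of_adj hab, eq_sub_of_add_eq' hsplit.symm]
  exact sub_mem (hH.pathVec_mem_span_of_isLeaf hdeg hℓ ⟨(w.reverse.concat hab).reverse⟩)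
    (hH.pathVec_mem_span_of_isLeaf hdeg hℓ ⟨w⟩)

theorem span_leafPathVecs (hH : H.IsAcyclic)
    (hdeg : ∀ w, ¬ IsLeaf H w → (H.neighborSet w).ncard ≠ 2) :
    Submodule.span ℝ (leafPathVecs H) = Pi.spanSubset ℝ H.edgeSet := by
  apply le_antisymm
  · rw [Submodule.span_le]
    rintro _ ⟨i, j, -, -, -, rfl⟩
    exact pathVec_mem_spanSubset fun e => onPath.mem_edgeSet
  · rw [Pi.spanSubset, Submodule.span_le]
    rintro _ ⟨e, he, rfl⟩
    induction e using Sym2.ind with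
    | _ a b => simpa using hH.single_mem_span_leafPathVecs hdeg he

end SimpleGraph.IsAcyclic

theorem pathVec_eq_of_le {H H' : SimpleGraph V} (hle : H' ≤ H) (hH : H.IsAcyclic) {i j : V}
    {p : H'.Walk i j} (hp : p.IsPath) : pathVec H i j = pathVec H' i j := by
  rw [hH.pathVec_eq (hp.mapLe hle), (hH.anti hle).pathVec_eq hp, Walk.edges_mapLe_eq_edges]

theorem finrank_vectorSpan_add_one {k W : Type*} [Field k] [AddCommGroup W] [Module k W]
    [FiniteDimensional k W] {s : Set W} (hne : s.Nonempty) (φ : W →ₗ[k] k) {c : k}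
    (hc : c ≠ 0) (hs : ∀ x ∈ s, φ x = c) :
    Module.finrank k (vectorSpan k s) + 1 = Module.finrank k (Submodule.span k s) := by
  obtain ⟨x₀, hx₀⟩ := hne
  have hsup : vectorSpan k s ⊔ Submodule.span k {x₀} = Submodule.span k s := by
    refine le_antisymm (sup_le ?_ (Submodule.span_mono (Set.singleton_subset_iff.mpr hx₀))) ?_
    · rw [vectorSpan_def, Submodule.span_le]
      rintro _ ⟨y, hy, z, hz, rfl⟩
      exact sub_mem (Submodule.subset_span hy) (Submodule.subset_span hz)
    · rw [Submodule.span_le]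
      intro y hy
      rw [← sub_add_cancel y x₀]
      exact add_mem (Submodule.mem_sup_left (vsub_mem_vectorSpan k hy hx₀))
        (Submodule.mem_sup_right (Submodule.mem_span_singleton_self x₀))
  have hx₀ : x₀ ∉ vectorSpan k s := by
    intro h
    have hker : vectorSpan k s ≤ LinearMap.ker φ := by
      rw [vectorSpan_def, Submodule.span_le]
      rintro _ ⟨y, hy, z, hz, rfl⟩
      simp [hs y hy, hs z hz]
    exact hc (hs x₀ hx₀ ▸ hker h)
  rw [← hsup, Submodule.finrank_sup_span_singleton hx₀]

theorem polyDim_convexHull {E : Type*} [AddCommGroup E] [Module ℝ E] (s : Set E) :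
    polyDim (convexHull ℝ s) = Module.finrank ℝ (vectorSpan ℝ s) := by
  rw [polyDim, affineSpan_convexHull, direction_affineSpan]

section Face

variable {E : Type*} [AddCommGroup E] [Module ℝ E] {s : Set E} {f : E →ₗ[ℝ] ℝ}

theorem convexHull_inter_ker_of_nonneg (hf : ∀ x ∈ s, 0 ≤ f x) :
    convexHull ℝ s ∩ {x | f x = 0} = convexHull ℝ (s ∩ {x | f x = 0}) := by
  refine subset_antisymm ?_ (Set.subset_inter (convexHull_mono Set.inter_subset_left)
    (convexHull_min Set.inter_subset_right (convex_hyperplane f.isLinear 0)))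
  rintro x ⟨hx, hfx⟩
  rw [convexHull_eq] at hx
  obtain ⟨ι, t, w, z, hw₀, hw₁, hz, rfl⟩ := hx
  have hterms : ∀ i ∈ t, w i * f (z i) = 0 := by
    refine (Finset.sum_eq_zero_iff_of_nonneg fun i hi =>
      mul_nonneg (hw₀ i hi) (hf _ (hz i hi))).mp ?_
    rw [← hfx.out, Finset.centerMass_eq_of_sum_1 _ _ hw₁, map_sum]
    simp
  rw [← Finset.centerMass_filter_ne_zero]
  refine Finset.centerMass_mem_convexHull _ (fun i hi => hw₀ i (Finset.mem_filter.mp hi).1)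
    (by rw [Finset.sum_filter_ne_zero, hw₁]; exact one_pos) fun i hi => ?_
  obtain ⟨hit, hwi⟩ := Finset.mem_filter.mp hi
  exact ⟨hz i hit, (mul_eq_zero.mp (hterms i hit)).resolve_left hwi⟩

theorem isFaceOf_convexHull_inter_ker (hf : ∀ x ∈ s, 0 ≤ f x) :
    IsFaceOf (convexHull ℝ s) (convexHull ℝ s ∩ {x | f x = 0}) := by
  have hhull : ∀ x ∈ convexHull ℝ s, 0 ≤ f x :=
    fun x hx => convexHull_min hf (convex_halfSpace_ge f.isLinear 0) hx
  refine ⟨-f, 0, fun x hx => by simpa using hhull x hx, ?_⟩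
  ext x
  simp

end Face

theorem eq_or_eq_of_adj_of_isLeaf {H : SimpleGraph V} (hH : H.Connected) {i j : V}
    (hij : H.Adj i j) (hi : IsLeaf H i) (hj : IsLeaf H j) (w : V) : w = i ∨ w = j := by
  have step : ∀ x y, H.Adj x y → x = i ∨ x = j → y = i ∨ y = j := by
    rintro x y hxy (rfl | rfl)
    · exact Or.inr (hi.unique hxy hij)
    · exact Or.inl (hj.unique hxy hij.symm)
  suffices ∀ x (q : H.Walk x w), x = i ∨ x = j → w = i ∨ w = j from
    this i (hH.preconnected i w).some (Or.inl rfl)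
  intro x q
  induction q with
  | nil => exact id
  | cons h _ ih => exact fun hx => ih (step _ _ h hx)

theorem not_adj_of_isLeaf {H : SimpleGraph V} (hH : H.Connected) (hE : 2 ≤ H.edgeSet.ncard)
    {i j : V} (hi : IsLeaf H i) (hj : IsLeaf H j) : ¬ H.Adj i j := by
  intro hij
  have hsub : H.edgeSet ⊆ {s(i, j)} := by
    intro e he
    induction e using Sym2.ind with
    | _ a b =>
      have hab : a ≠ b := H.ne_of_adj he
      rcases eq_or_eq_of_adj_of_isLeaf hH hij hi hj a with rfl | rfl <;>
        rcases eq_or_eq_of_adj_of_isLeaf hH hij hi hj b with rfl | rfl <;>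
        simp_all [Sym2.eq_swap]
  have := Set.ncard_le_ncard hsub
  rw [Set.ncard_singleton] at this
  omega

def leafEdgeSum [Fintype V] (H : SimpleGraph V) : (Sym2 V → ℝ) →ₗ[ℝ] ℝ :=
  ∑ e ∈ (leafEdges H).toFinset, LinearMap.proj e

theorem leafEdgeSum_apply [Fintype V] (H : SimpleGraph V) (x : Sym2 V → ℝ) :
    leafEdgeSum H x = ∑ e ∈ (leafEdges H).toFinset, x e := by
  simp [leafEdgeSum]

/-- A leaf-to-leaf path meets exactly two leaf edges, its first and its last one; they differ
because two adjacent leaves would make up the whole tree. -/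
theorem leafEdgeSum_pathVec [Fintype V] {H : SimpleGraph V} (hH : H.IsTree)
    (hE : 2 ≤ H.edgeSet.ncard) {i j : V} (hij : i ≠ j) (hi : IsLeaf H i) (hj : IsLeaf H j) :
    leafEdgeSum H (pathVec H i j) = 2 := by
  obtain ⟨p, hp⟩ := (hH.connected.preconnected i j).some.toPath
  have hnil : ¬ p.Nil := Walk.not_nil_of_ne hij
  have hends : (leafEdges H).toFinset.filter (· ∈ p.edges) =
      {s(i, p.snd), s(p.penultimate, j)} := by
    ext e
    simp only [Finset.mem_filter, Set.mem_toFinset, Finset.mem_insert, Finset.mem_singleton]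
    constructor
    · rintro ⟨⟨he, w, hwe, hw⟩, hep⟩
      obtain ⟨z, rfl⟩ := Sym2.mem_iff_exists.mp hwe
      rcases hp.eq_or_eq_of_isLeaf (p.fst_mem_support_of_mem_edges hep) hw with rfl | rfl
      · exact Or.inl (congrArg _ (hw.unique he (p.adj_snd hnil)))
      · rw [Sym2.eq_swap]
        exact Or.inr (congrArg (s(·, w)) (hw.unique he (p.adj_penultimate hnil).symm))
    · rintro (rfl | rfl)
      · exact ⟨⟨p.adj_snd hnil, i, Sym2.mem_mk_left _ _, hi⟩, p.mk_start_snd_mem_edges hnil⟩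
      · exact ⟨⟨p.adj_penultimate hnil, j, Sym2.mem_mk_right _ _, hj⟩,
          p.mk_penultimate_end_mem_edges hnil⟩
  have hne : s(i, p.snd) ≠ s(p.penultimate, j) := by
    rw [Ne, Sym2.eq_iff]
    rintro (⟨-, h⟩ | ⟨h, -⟩)
    · exact not_adj_of_isLeaf hH.connected hE hi hj (h ▸ p.adj_snd hnil)
    · exact hij h
  rw [leafEdgeSum_apply, hH.isAcyclic.pathVec_eq hp, Finset.sum_boole, hends,
    Finset.card_pair hne]
  norm_num

section DeleteEdge

variable {G : SimpleGraph V} {u v : V}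

theorem neighborSet_deleteEdges_of_ne {w : V} (hwu : w ≠ u) (hwv : w ≠ v) :
    (G.deleteEdges {s(u, v)}).neighborSet w = G.neighborSet w := by
  ext y
  simp [hwu, hwv]

theorem neighborSet_deleteEdges_left :
    (G.deleteEdges {s(u, v)}).neighborSet u = G.neighborSet u \ {v} := by
  ext y
  simpa using fun h _ _ => h.ne'

theorem ncard_neighborSet_deleteEdges_left [Finite V] (huv : G.Adj u v)
    (hdeg : ¬ IsLeaf G u → (G.neighborSet u).ncard ≠ 2) (hu : (G.neighborSet u).ncard ≠ 3) :
    ((G.deleteEdges {s(u, v)}).neighborSet u).ncard = 0 ∨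
      3 ≤ ((G.deleteEdges {s(u, v)}).neighborSet u).ncard := by
  rw [neighborSet_deleteEdges_left,
    Set.ncard_sdiff_singleton_of_mem (show v ∈ G.neighborSet u from huv)]
  have h0 : 0 < (G.neighborSet u).ncard := (Set.ncard_pos (Set.toFinite _)).mpr ⟨v, huv⟩
  by_cases hl : IsLeaf G u
  · exact Or.inl (by rw [isLeaf_iff_ncard_neighborSet.mp hl])
  · have := hdeg hl
    have := mt isLeaf_iff_ncard_neighborSet.mpr hl
    omega

theorem isLeaf_deleteEdges_iff_of_ne {w : V} (hwu : w ≠ u) (hwv : w ≠ v) :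
    IsLeaf (G.deleteEdges {s(u, v)}) w ↔ IsLeaf G w := by
  rw [isLeaf_iff_ncard_neighborSet, isLeaf_iff_ncard_neighborSet,
    neighborSet_deleteEdges_of_ne hwu hwv]

theorem ncard_neighborSet_deleteEdges_of_mem [Finite V] (huv : G.Adj u v)
    (hdeg : ∀ w, ¬ IsLeaf G w → (G.neighborSet w).ncard ≠ 2) (hu : (G.neighborSet u).ncard ≠ 3)
    (hv : (G.neighborSet v).ncard ≠ 3) {w : V} (hw : w = u ∨ w = v) :
    ((G.deleteEdges {s(u, v)}).neighborSet w).ncard = 0 ∨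
      3 ≤ ((G.deleteEdges {s(u, v)}).neighborSet w).ncard := by
  rcases hw with rfl | rfl
  · exact ncard_neighborSet_deleteEdges_left huv (hdeg _) hu
  · rw [Sym2.eq_swap]
    exact ncard_neighborSet_deleteEdges_left huv.symm (hdeg _) hv

theorem ncard_neighborSet_deleteEdges_ne_two [Finite V] (huv : G.Adj u v)
    (hdeg : ∀ w, ¬ IsLeaf G w → (G.neighborSet w).ncard ≠ 2) (hu : (G.neighborSet u).ncard ≠ 3)
    (hv : (G.neighborSet v).ncard ≠ 3) :
    ∀ w, ¬ IsLeaf (G.deleteEdges {s(u, v)}) w →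
      ((G.deleteEdges {s(u, v)}).neighborSet w).ncard ≠ 2 := by
  intro w hw
  by_cases hend : w = u ∨ w = v
  · have := ncard_neighborSet_deleteEdges_of_mem huv hdeg hu hv hend
    omega
  obtain ⟨hwu, hwv⟩ := not_or.mp hend
  rw [neighborSet_deleteEdges_of_ne hwu hwv]
  exact hdeg w (mt (isLeaf_deleteEdges_iff_of_ne hwu hwv).mpr hw)

theorem isLeaf_of_isLeaf_deleteEdges [Finite V] (huv : G.Adj u v)
    (hdeg : ∀ w, ¬ IsLeaf G w → (G.neighborSet w).ncard ≠ 2) (hu : (G.neighborSet u).ncard ≠ 3)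
    (hv : (G.neighborSet v).ncard ≠ 3) {w : V}
    (hw : IsLeaf (G.deleteEdges {s(u, v)}) w) : IsLeaf G w := by
  by_cases hend : w = u ∨ w = v
  · have := ncard_neighborSet_deleteEdges_of_mem huv hdeg hu hv hend
    rw [isLeaf_iff_ncard_neighborSet] at hw
    omega
  obtain ⟨hwu, hwv⟩ := not_or.mp hend
  exact (isLeaf_deleteEdges_iff_of_ne hwu hwv).mp hw

end DeleteEdge

theorem setOf_not_onPath_eq_leafPathVecs_inter (G : SimpleGraph V) (u v : V) :
    {x : Sym2 V → ℝ | ∃ i j : V, i ≠ j ∧ IsLeaf G i ∧ IsLeaf G j ∧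
      ¬ onPath G i j s(u, v) ∧ x = pathVec G i j} = leafPathVecs G ∩ {x | x s(u, v) = 0} := by
  ext x
  constructor
  · rintro ⟨i, j, hij, hi, hj, hon, rfl⟩
    exact ⟨⟨i, j, hij, hi, hj, rfl⟩, pathVec_eq_zero_iff.mpr hon⟩
  · rintro ⟨⟨i, j, hij, hi, hj, rfl⟩, h⟩
    exact ⟨i, j, hij, hi, hj, pathVec_eq_zero_iff.mp h, rfl⟩

theorem span_leafPathVecs_inter_eq_zero [Fintype V] {G : SimpleGraph V} (hG : G.IsTree)
    (hdeg : ∀ w, ¬ IsLeaf G w → (G.neighborSet w).ncard ≠ 2) {u v : V} (huv : G.Adj u v)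
    (hu : (G.neighborSet u).ncard ≠ 3) (hv : (G.neighborSet v).ncard ≠ 3) :
    Submodule.span ℝ (leafPathVecs G ∩ {x | x s(u, v) = 0}) =
      Pi.spanSubset ℝ (G.edgeSet \ {s(u, v)}) := by
  have hG' : (G.deleteEdges {s(u, v)}).IsAcyclic := hG.isAcyclic.anti (G.deleteEdges_le _)
  apply le_antisymm
  · rw [Submodule.span_le]
    rintro _ ⟨⟨i, j, -, -, -, rfl⟩, huv₀⟩
    refine pathVec_mem_spanSubset fun e he => ⟨he.mem_edgeSet, ?_⟩
    rintro rfl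
    exact pathVec_eq_zero_iff.mp huv₀ he
  rw [← edgeSet_deleteEdges,
    ← hG'.span_leafPathVecs (ncard_neighborSet_deleteEdges_ne_two huv hdeg hu hv),
    Submodule.span_le]
  rintro _ ⟨i, j, hij, hi, hj, rfl⟩
  by_cases hr : (G.deleteEdges {s(u, v)}).Reachable i j
  swap
  · rw [pathVec_eq_zero_of_not_reachable hr]
    exact zero_mem _
  obtain ⟨p, hp⟩ := hr.some.toPath
  refine Submodule.subset_span ⟨⟨i, j, hij, isLeaf_of_isLeaf_deleteEdges huv hdeg hu hv hi,
    isLeaf_of_isLeaf_deleteEdges huv hdeg hu hv hj,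
    (pathVec_eq_of_le (G.deleteEdges_le _) hG.isAcyclic hp).symm⟩, ?_⟩
  exact pathVec_eq_zero_iff.mpr fun h => by simpa using h.mem_edgeSet

theorem polyDim_convexHull_add_one [Fintype V] {G : SimpleGraph V} (hG : G.IsTree)
    (hE : 2 ≤ G.edgeSet.ncard) {s : Set (Sym2 V → ℝ)} (hs : s ⊆ leafPathVecs G)
    {T : Set (Sym2 V)} (hT : T.Nonempty) (hspan : Submodule.span ℝ s = Pi.spanSubset ℝ T) :
    polyDim (convexHull ℝ s) + 1 = T.ncard := by
  have hne : s.Nonempty := by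
    by_contra h
    have := congrArg (fun W : Submodule ℝ (Sym2 V → ℝ) => Module.finrank ℝ W) hspan
    rw [Set.not_nonempty_iff_eq_empty.mp h, Submodule.span_empty, finrank_bot,
      Pi.dim_spanSubset] at this
    exact (Set.ncard_pos T.toFinite).mpr hT |>.ne this
  rw [polyDim_convexHull, ← Pi.dim_spanSubset (R := ℝ), ← hspan]
  refine finrank_vectorSpan_add_one hne (leafEdgeSum G) two_ne_zero fun x hx => ?_
  obtain ⟨i, j, hij, hi, hj, rfl⟩ := hs hx
  exact leafEdgeSum_pathVec hG hE hij hi hj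

/-- For a tree with at least 3 edges and no internal vertex of degree 2,
and an edge `{u,v}` with `deg u ≠ 3 ≠ deg v`, the convex hull of the path vectors avoiding
`{u,v}` equals `P_T ∩ {x_{u,v} = 0}` and is a facet of `P_T` of dimension `|E| − 2`. -/
theorem facet_F [Fintype V] (G : SimpleGraph V)
    (hG : G.IsTree) (hE : 3 ≤ G.edgeSet.ncard)
    (hdeg2 : ∀ w, ¬ IsLeaf G w → (G.neighborSet w).ncard ≠ 2)
    (u v : V) (huv : G.Adj u v)
    (hu : (G.neighborSet u).ncard ≠ 3) (hv : (G.neighborSet v).ncard ≠ 3) :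
    convexHull ℝ {x : Sym2 V → ℝ | ∃ i j : V, i ≠ j ∧ IsLeaf G i ∧ IsLeaf G j ∧
        ¬ onPath G i j s(u, v) ∧ x = pathVec G i j}
      = pathPolytope G ∩ {x | x s(u, v) = 0} ∧
    IsFacetOf (pathPolytope G)
      (convexHull ℝ {x : Sym2 V → ℝ | ∃ i j : V, i ≠ j ∧ IsLeaf G i ∧ IsLeaf G j ∧
        ¬ onPath G i j s(u, v) ∧ x = pathVec G i j}) ∧
    polyDim (convexHull ℝ {x : Sym2 V → ℝ | ∃ i j : V, i ≠ j ∧ IsLeaf G i ∧ IsLeaf G j ∧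
        ¬ onPath G i j s(u, v) ∧ x = pathVec G i j}) + 2 = G.edgeSet.ncard := by
  have hnonneg : ∀ x ∈ leafPathVecs G, 0 ≤ LinearMap.proj (R := ℝ) s(u, v) x := by
    rintro _ ⟨i, j, -, -, -, rfl⟩
    exact pathVec_nonneg G i j _
  have hcard := Set.ncard_sdiff_singleton_add_one (show s(u, v) ∈ G.edgeSet from huv)
  have hdimP : polyDim (pathPolytope G) + 1 = _ := polyDim_convexHull_add_one hG (by omega)
    subset_rfl ⟨s(u, v), huv⟩ (hG.isAcyclic.span_leafPathVecs hdeg2)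
  have hdimF := polyDim_convexHull_add_one hG (by omega) Set.inter_subset_left
    (Set.nonempty_of_ncard_ne_zero (by omega))
    (span_leafPathVecs_inter_eq_zero hG hdeg2 huv hu hv)
  have hhull : pathPolytope G ∩ {x | x s(u, v) = 0} =
      convexHull ℝ (leafPathVecs G ∩ {x | x s(u, v) = 0}) :=
    convexHull_inter_ker_of_nonneg hnonneg
  have hface : IsFaceOf (pathPolytope G) (pathPolytope G ∩ {x | x s(u, v) = 0}) :=
    isFaceOf_convexHull_inter_ker hnonneg
  rw [setOf_not_onPath_eq_leafPathVecs_inter]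
  exact ⟨hhull.symm, ⟨hhull ▸ hface, by omega⟩, by omega⟩
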